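/- Let φ ∈ BMO(ℝ^n) and δ > 0. Partition ℝ^n into half-open cubes Q_j of side length δ with vertex set δℤ^n, and set h(x) = Σ_j φ_{Q_j} χ_{Q_j}(x), where φ_{Q_j} is the mean of φ over Q_j. Then ‖φ - h‖_* ≤ C(n) M_{2δ}(φ), where M_{2δ}(φ) = sup_{ℓ(Q)≤2δ} (1/|Q|)∫_Q |φ - φ_Q| and C(n) depends only on n. -/

import Mathlib

open MeasureTheory Real Set Filter

/-- Open axis-parallel cube with corner `c` and side length `l`. -/
def cube {n : ℕ} (c : EuclideanSpace ℝ (Fin n)) (l : ℝ) : Set (EuclideanSpace ℝ (Fin n)) :=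
  {x | ∀ i, x i ∈ Set.Ioo (c i) (c i + l)}

/-- Mean of `f` over the cube with corner `c` and side length `l`. -/
noncomputable def cubeAvg {n : ℕ} (f : EuclideanSpace ℝ (Fin n) → ℝ)
    (c : EuclideanSpace ℝ (Fin n)) (l : ℝ) : ℝ :=
  (∫ x in cube c l, f x) / l ^ n

/-- Mean oscillation of `f` over the cube with corner `c` and side length `l`. -/
noncomputable def cubeOsc {n : ℕ} (f : EuclideanSpace ℝ (Fin n) → ℝ)
    (c : EuclideanSpace ℝ (Fin n)) (l : ℝ) : ℝ :=
  (∫ x in cube c l, |f x - cubeAvg f c l|) / l ^ n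

/-- `f ∈ BMO(ℝⁿ)`. -/
def IsBMO {n : ℕ} (f : EuclideanSpace ℝ (Fin n) → ℝ) : Prop :=
  LocallyIntegrable f ∧ ∃ C, ∀ c l, 0 < l → cubeOsc f c l ≤ C

/-- `f ∈ VMO(ℝⁿ)`. -/
def IsVMO {n : ℕ} (f : EuclideanSpace ℝ (Fin n) → ℝ) : Prop :=
  IsBMO f ∧ ∀ ε > (0 : ℝ), ∃ δ > (0 : ℝ), ∀ c l, 0 < l → l ≤ δ → cubeOsc f c l ≤ ε

/-- The `BMO` seminorm `‖f‖_*`. -/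
noncomputable def bmoNorm {n : ℕ} (f : EuclideanSpace ℝ (Fin n) → ℝ) : ℝ :=
  sInf {C : ℝ | 0 ≤ C ∧ ∀ c l, 0 < l → cubeOsc f c l ≤ C}

/-- Half-open axis-parallel cube with corner `c` and side length `l`. -/
def cubeIco {n : ℕ} (c : EuclideanSpace ℝ (Fin n)) (l : ℝ) : Set (EuclideanSpace ℝ (Fin n)) :=
  {x | ∀ i, x i ∈ Set.Ico (c i) (c i + l)}

/-- The corner of the half-open grid cube of side `δ` (with vertex set `δℤⁿ`) containing `x`. -/
noncomputable def gridCorner {n : ℕ} (δ : ℝ) (x : EuclideanSpace ℝ (Fin n)) :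
    EuclideanSpace ℝ (Fin n) :=
  (EuclideanSpace.equiv (Fin n) ℝ).symm fun i => δ * (⌊x i / δ⌋ : ℤ)

/-- The step function `h = Σ_j φ_{Q_j} χ_{Q_j}` built from the grid of half-open cubes of
side `δ`: at `x` it equals the mean of `φ` over the grid cube containing `x`. -/
noncomputable def gridFn {n : ℕ} (φ : EuclideanSpace ℝ (Fin n) → ℝ) (δ : ℝ)
    (x : EuclideanSpace ℝ (Fin n)) : ℝ :=
  (∫ y in cubeIco (gridCorner δ x) δ, φ y) / δ ^ n

/-!
Write `g = φ - gridFn φ δ` and fix a cube `Q` of side `l`. The mean oscillation of `g` over `Q` is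
at most twice the mean of `|g - a|` over `Q`, for any constant `a`.

If `l ≤ δ`, all grid cubes meeting `Q` lie in one cube `Q*` of side `2δ`, so on `Q` the step
function stays within `2ⁿ B` of `φ_{Q*}`; the constant `a = φ_Q - φ_{Q*}` gives `2 (2ⁿ + 1) B`.

If `l > δ`, take `a = 0`: `Q` is covered by at most `(l / δ + 2)ⁿ ≤ (3 l / δ)ⁿ` grid cubes, and on
each of them `g` is `φ` minus its own mean, so `∫ |g| ≤ B δⁿ` there; this gives `2 · 3ⁿ B`.
-/

section Average

variable {α : Type*} [MeasurableSpace α] {μ : Measure α} [IsFiniteMeasure μ] {f : α → ℝ}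

theorem measureReal_univ_mul_abs_average_sub_le (hf : Integrable f μ) (a : ℝ) :
    μ.real univ * |⨍ x, f x ∂μ - a| ≤ ∫ x, |f x - a| ∂μ := by
  have h : μ.real univ * (⨍ x, f x ∂μ - a) = ∫ x, (f x - a) ∂μ := by
    rw [integral_sub hf (integrable_const a), ← measure_smul_average, integral_const,
      smul_eq_mul, smul_eq_mul, mul_sub]
  rw [← abs_of_nonneg (measureReal_nonneg (μ := μ) (s := univ)), ← abs_mul, h]
  exact abs_integral_le_integral_abs

theorem integral_abs_sub_average_le (hf : Integrable f μ) (a : ℝ) :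
    ∫ x, |f x - ⨍ y, f y ∂μ| ∂μ ≤ 2 * ∫ x, |f x - a| ∂μ := by
  have hfa : Integrable (fun x => |f x - a|) μ := (hf.sub (integrable_const a)).abs
  calc ∫ x, |f x - ⨍ y, f y ∂μ| ∂μ ≤ ∫ x, (|f x - a| + |⨍ y, f y ∂μ - a|) ∂μ := by
        refine integral_mono (hf.sub (integrable_const _)).abs (hfa.add (integrable_const _))
          fun x => ?_
        simpa only [abs_sub_comm a] using abs_sub_le (f x) a (⨍ y, f y ∂μ)
    _ = ∫ x, |f x - a| ∂μ + μ.real univ * |⨍ y, f y ∂μ - a| := by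
        rw [integral_add hfa (integrable_const _), integral_const, smul_eq_mul]
    _ ≤ 2 * ∫ x, |f x - a| ∂μ := by
        linarith [measureReal_univ_mul_abs_average_sub_le hf a]

end Average

section CoordinateBoxes

variable {ι : Type*} {s : ι → Set ℝ}

theorem setOf_forall_mem_eq_preimage_ofLp (s : ι → Set ℝ) :
    {x : EuclideanSpace ℝ ι | ∀ i, x i ∈ s i} = WithLp.ofLp ⁻¹' univ.pi s := by
  ext x
  simp [Set.mem_pi]

theorem isCompact_setOf_forall_mem (hs : ∀ i, IsCompact (s i)) :
    IsCompact {x : EuclideanSpace ℝ ι | ∀ i, x i ∈ s i} := by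
  rw [setOf_forall_mem_eq_preimage_ofLp]
  exact (EuclideanSpace.equiv ι ℝ).toHomeomorph.isCompact_preimage.2 (isCompact_univ_pi hs)

variable [Fintype ι]

theorem measurableSet_setOf_forall_mem (hs : ∀ i, MeasurableSet (s i)) :
    MeasurableSet {x : EuclideanSpace ℝ ι | ∀ i, x i ∈ s i} := by
  rw [setOf_forall_mem_eq_preimage_ofLp]
  exact (PiLp.volume_preserving_ofLp ι).measurable (MeasurableSet.univ_pi hs)

theorem volume_setOf_forall_mem (hs : ∀ i, MeasurableSet (s i)) :
    volume {x : EuclideanSpace ℝ ι | ∀ i, x i ∈ s i} = ∏ i, volume (s i) := by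
  rw [setOf_forall_mem_eq_preimage_ofLp, (PiLp.volume_preserving_ofLp ι).measure_preimage
    (MeasurableSet.univ_pi hs).nullMeasurableSet, volume_pi_pi]

end CoordinateBoxes

section Cubes

variable {n : ℕ} {c c' : EuclideanSpace ℝ (Fin n)} {l l' : ℝ} {f : EuclideanSpace ℝ (Fin n) → ℝ}

theorem measurableSet_cube : MeasurableSet (cube c l) :=
  measurableSet_setOf_forall_mem fun _ => measurableSet_Ioo

theorem measurableSet_cubeIco : MeasurableSet (cubeIco c l) :=
  measurableSet_setOf_forall_mem fun _ => measurableSet_Ico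

theorem volume_cube : volume (cube c l) = ENNReal.ofReal l ^ n := by
  rw [cube, volume_setOf_forall_mem fun _ => measurableSet_Ioo]
  simp [Real.volume_Ioo]

theorem volume_cubeIco : volume (cubeIco c l) = ENNReal.ofReal l ^ n := by
  rw [cubeIco, volume_setOf_forall_mem fun _ => measurableSet_Ico]
  simp [Real.volume_Ico]

theorem volume_cube_ne_top : volume (cube c l) ≠ ⊤ := by
  rw [volume_cube]
  exact ENNReal.pow_ne_top ENNReal.ofReal_ne_top

theorem volume_cubeIco_ne_top : volume (cubeIco c l) ≠ ⊤ := by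
  rw [volume_cubeIco]
  exact ENNReal.pow_ne_top ENNReal.ofReal_ne_top

theorem measureReal_cube (hl : 0 ≤ l) : volume.real (cube c l) = l ^ n := by
  rw [measureReal_def, volume_cube, ENNReal.toReal_pow, ENNReal.toReal_ofReal hl]

theorem cube_subset_cubeIco : cube c l ⊆ cubeIco c l :=
  fun _ hx i => Ioo_subset_Ico_self (hx i)

theorem cube_ae_eq_cubeIco : cube c l =ᵐ[volume] cubeIco c l :=
  ae_eq_of_subset_of_measure_ge cube_subset_cubeIco (by rw [volume_cube, volume_cubeIco])
    measurableSet_cube.nullMeasurableSet volume_cubeIco_ne_top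

theorem cube_subset_cube (h : ∀ i, c' i ≤ c i ∧ c i + l ≤ c' i + l') : cube c l ⊆ cube c' l' :=
  fun _ hx i => ⟨(h i).1.trans_lt (hx i).1, (hx i).2.trans_le (h i).2⟩

theorem _root_.MeasureTheory.LocallyIntegrable.integrableOn_cube (hf : LocallyIntegrable f) :
    IntegrableOn f (cube c l) :=
  (hf.integrableOn_isCompact (isCompact_setOf_forall_mem fun _ => isCompact_Icc)).mono_set
    fun _ hx i => Ioo_subset_Icc_self (hx i)

theorem cubeAvg_eq_setAverage (hl : 0 ≤ l) : cubeAvg f c l = ⨍ x in cube c l, f x := by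
  rw [cubeAvg, setAverage_eq, measureReal_cube hl, smul_eq_mul, div_eq_inv_mul]

theorem cubeOsc_nonneg (hl : 0 ≤ l) : 0 ≤ cubeOsc f c l :=
  div_nonneg (integral_nonneg fun _ => abs_nonneg _) (pow_nonneg hl n)

theorem setIntegral_abs_sub_cubeAvg_le {B : ℝ} (hl : 0 < l) (h : cubeOsc f c l ≤ B) :
    ∫ x in cube c l, |f x - cubeAvg f c l| ≤ B * l ^ n :=
  (div_le_iff₀ (pow_pos hl n)).1 h

theorem cubeOsc_le_two_mul (hl : 0 ≤ l) (hf : IntegrableOn f (cube c l)) (a : ℝ) :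
    cubeOsc f c l ≤ 2 * (∫ x in cube c l, |f x - a|) / l ^ n := by
  have := isFiniteMeasure_restrict.2 (volume_cube_ne_top (c := c) (l := l))
  rw [cubeOsc, cubeAvg_eq_setAverage hl]
  gcongr
  exact integral_abs_sub_average_le hf a

theorem pow_mul_abs_cubeAvg_sub_le (hl : 0 ≤ l) (hsub : cube c l ⊆ cube c' l')
    (hf : IntegrableOn f (cube c' l')) (a : ℝ) :
    l ^ n * |cubeAvg f c l - a| ≤ ∫ x in cube c' l', |f x - a| := by
  have := isFiniteMeasure_restrict.2 (volume_cube_ne_top (c := c) (l := l))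
  calc l ^ n * |cubeAvg f c l - a| ≤ ∫ x in cube c l, |f x - a| := by
        simpa [cubeAvg_eq_setAverage hl, measureReal_cube hl] using
          measureReal_univ_mul_abs_average_sub_le (hf.mono_set hsub) a
    _ ≤ ∫ x in cube c' l', |f x - a| :=
        setIntegral_mono_set (hf.sub (integrableOn_const volume_cube_ne_top)).abs
          (Eventually.of_forall fun _ => abs_nonneg _) hsub.eventuallyLE

end Cubes

section Grid

variable {n : ℕ} {δ l : ℝ} {c x : EuclideanSpace ℝ (Fin n)} {k : Fin n → ℤ}
  {φ : EuclideanSpace ℝ (Fin n) → ℝ}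

noncomputable def gridIndex (δ : ℝ) (x : EuclideanSpace ℝ (Fin n)) : Fin n → ℤ :=
  fun i => ⌊x i / δ⌋

noncomputable def gridPoint (δ : ℝ) (k : Fin n → ℤ) : EuclideanSpace ℝ (Fin n) :=
  (EuclideanSpace.equiv (Fin n) ℝ).symm fun i => δ * k i

def gridCube (δ : ℝ) (k : Fin n → ℤ) : Set (EuclideanSpace ℝ (Fin n)) :=
  cubeIco (gridPoint δ k) δ

theorem gridPoint_apply (i : Fin n) : gridPoint δ k i = δ * k i := rfl

theorem gridCorner_eq_gridPoint_gridIndex : gridCorner δ x = gridPoint δ (gridIndex δ x) := rfl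

theorem mem_gridCube_iff (hδ : 0 < δ) : x ∈ gridCube δ k ↔ gridIndex δ x = k := by
  simp only [gridCube, cubeIco, Set.mem_ofPred_eq, mem_Ico, gridPoint_apply, funext_iff, gridIndex,
    Int.floor_eq_iff, le_div_iff₀ hδ, div_lt_iff₀ hδ]
  refine forall_congr' fun i => and_congr (by rw [mul_comm]) (by rw [add_mul, one_mul, mul_comm])

theorem gridFn_eq_cubeAvg : gridFn φ δ x = cubeAvg φ (gridCorner δ x) δ := by
  rw [gridFn, cubeAvg, setIntegral_congr_set cube_ae_eq_cubeIco]

theorem gridFn_eq_of_mem_gridCube (hδ : 0 < δ) (hx : x ∈ gridCube δ k) :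
    gridFn φ δ x = cubeAvg φ (gridPoint δ k) δ := by
  rw [gridFn_eq_cubeAvg, gridCorner_eq_gridPoint_gridIndex, (mem_gridCube_iff hδ).1 hx]

theorem integrableOn_gridFn_gridCube (hδ : 0 < δ) : IntegrableOn (gridFn φ δ) (gridCube δ k) :=
  (integrableOn_const volume_cubeIco_ne_top).congr_fun
    (fun _ hx => (gridFn_eq_of_mem_gridCube hδ hx).symm) measurableSet_cubeIco

noncomputable def gridIndicesOfCube (δ : ℝ) (c : EuclideanSpace ℝ (Fin n)) (l : ℝ) :
    Finset (Fin n → ℤ) :=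
  Finset.Icc (gridIndex δ c) fun i => ⌊(c i + l) / δ⌋

theorem gridIndex_mem_gridIndicesOfCube (hδ : 0 < δ) (hx : x ∈ cube c l) :
    gridIndex δ x ∈ gridIndicesOfCube δ c l :=
  Finset.mem_Icc.2 ⟨fun i => Int.floor_mono (by gcongr; exact (hx i).1.le),
    fun i => Int.floor_mono (by gcongr; exact (hx i).2.le)⟩

theorem cube_subset_biUnion_gridCube (hδ : 0 < δ) :
    cube c l ⊆ ⋃ k ∈ gridIndicesOfCube δ c l, gridCube δ k :=
  fun _ hx => mem_biUnion (gridIndex_mem_gridIndicesOfCube hδ hx) ((mem_gridCube_iff hδ).2 rfl)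

theorem card_gridIndicesOfCube_le (hδ : 0 < δ) (hl : 0 ≤ l) :
    ((gridIndicesOfCube δ c l).card : ℝ) ≤ (l / δ + 2) ^ n := by
  rw [gridIndicesOfCube, Pi.card_Icc, Nat.cast_prod]
  refine (Finset.prod_le_prod (fun _ _ => Nat.cast_nonneg _) fun i _ => ?_).trans_eq
    (Fin.prod_const n _)
  have hle : ⌊c i / δ⌋ ≤ ⌊(c i + l) / δ⌋ := Int.floor_mono (by gcongr; linarith)
  rw [Int.card_Icc, ← Int.cast_natCast, Int.toNat_of_nonneg (by simp only [gridIndex]; omega)]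
  push_cast
  have hub := Int.floor_le ((c i + l) / δ)
  have hlb := Int.sub_one_lt_floor (c i / δ)
  rw [add_div] at hub ⊢
  simp only [gridIndex]
  linarith

theorem cube_gridCorner_subset (hδ : 0 < δ) (hlδ : l ≤ δ) (hx : x ∈ cube c l) :
    cube (gridCorner δ x) δ ⊆ cube (gridCorner δ c) (2 * δ) := by
  refine cube_subset_cube fun i => ?_
  simp only [gridCorner_eq_gridPoint_gridIndex, gridPoint_apply, gridIndex]
  have hlow : ⌊c i / δ⌋ ≤ ⌊x i / δ⌋ := Int.floor_mono (by gcongr; exact (hx i).1.le)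
  have hup : ⌊x i / δ⌋ ≤ ⌊c i / δ⌋ + 1 := by
    rw [← Int.floor_add_one, div_add_one hδ.ne']
    exact Int.floor_mono (by gcongr; linarith [(hx i).2])
  have hlow' : (⌊c i / δ⌋ : ℝ) ≤ ⌊x i / δ⌋ := by exact_mod_cast hlow
  have hup' : (⌊x i / δ⌋ : ℝ) ≤ ⌊c i / δ⌋ + 1 := by exact_mod_cast hup
  constructor <;> nlinarith

theorem integrableOn_gridFn_cube (hδ : 0 < δ) : IntegrableOn (gridFn φ δ) (cube c l) :=
  (integrableOn_finset_iUnion.2 fun _ _ => integrableOn_gridFn_gridCube hδ).mono_set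
    (cube_subset_biUnion_gridCube hδ)

end Grid

section GridApproximation

open Function

variable {n : ℕ} {δ l B : ℝ} {c : EuclideanSpace ℝ (Fin n)} {φ : EuclideanSpace ℝ (Fin n) → ℝ}

theorem nonneg_of_forall_cubeOsc_le (hδ : 0 < δ)
    (hB : ∀ c l, 0 < l → l ≤ 2 * δ → cubeOsc φ c l ≤ B) : 0 ≤ B :=
  (cubeOsc_nonneg hδ.le).trans (hB 0 δ hδ (by linarith))

theorem setIntegral_abs_sub_gridFn_gridCube_le (hδ : 0 < δ) {k : Fin n → ℤ}
    (h : cubeOsc φ (gridPoint δ k) δ ≤ B) :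
    ∫ x in gridCube δ k, |φ x - gridFn φ δ x| ≤ B * δ ^ n := by
  rw [setIntegral_congr_fun (s := gridCube δ k) measurableSet_cubeIco fun x hx => by
      rw [gridFn_eq_of_mem_gridCube hδ hx],
    gridCube, ← setIntegral_congr_set cube_ae_eq_cubeIco]
  exact setIntegral_abs_sub_cubeAvg_le hδ h

theorem abs_gridFn_sub_cubeAvg_le (hφ : LocallyIntegrable φ) (hδ : 0 < δ)
    {x p : EuclideanSpace ℝ (Fin n)} (h : cubeOsc φ p (2 * δ) ≤ B)
    (hsub : cube (gridCorner δ x) δ ⊆ cube p (2 * δ)) :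
    |gridFn φ δ x - cubeAvg φ p (2 * δ)| ≤ 2 ^ n * B := by
  have hmean := pow_mul_abs_cubeAvg_sub_le hδ.le hsub hφ.integrableOn_cube (cubeAvg φ p (2 * δ))
  have hosc := setIntegral_abs_sub_cubeAvg_le (by positivity) h
  rw [← gridFn_eq_cubeAvg] at hmean
  exact le_of_mul_le_mul_left (hmean.trans (hosc.trans_eq (by ring))) (pow_pos hδ n)

theorem cubeOsc_sub_gridFn_le_of_le (hφ : LocallyIntegrable φ) (hδ : 0 < δ)
    (hB : ∀ c l, 0 < l → l ≤ 2 * δ → cubeOsc φ c l ≤ B) (hl : 0 < l) (hlδ : l ≤ δ) :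
    cubeOsc (fun x => φ x - gridFn φ δ x) c l ≤ 2 * (2 ^ n + 1) * B := by
  set T := cubeAvg φ (gridCorner δ c) (2 * δ)
  have hT : ∀ x ∈ cube c l, |gridFn φ δ x - T| ≤ 2 ^ n * B := fun x hx =>
    abs_gridFn_sub_cubeAvg_le hφ hδ (hB _ _ (by positivity) le_rfl)
      (cube_gridCorner_subset hδ hlδ hx)
  have hφQ : IntegrableOn φ (cube c l) := hφ.integrableOn_cube
  have hdev : IntegrableOn (fun x => |φ x - cubeAvg φ c l|) (cube c l) :=
    (hφQ.sub (integrableOn_const volume_cube_ne_top)).abs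
  calc cubeOsc (fun x => φ x - gridFn φ δ x) c l
      ≤ 2 * (∫ x in cube c l, |φ x - gridFn φ δ x - (cubeAvg φ c l - T)|) / l ^ n :=
        cubeOsc_le_two_mul hl.le (hφQ.sub (integrableOn_gridFn_cube hδ)) _
    _ ≤ 2 * (∫ x in cube c l, (|φ x - cubeAvg φ c l| + 2 ^ n * B)) / l ^ n := by
        gcongr 2 * ?_ / _
        refine setIntegral_mono_on
          ((hφQ.sub (integrableOn_gridFn_cube hδ)).sub (integrableOn_const volume_cube_ne_top)).abs
          (hdev.add (integrableOn_const volume_cube_ne_top)) measurableSet_cube fun x hx => ?_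
        calc |φ x - gridFn φ δ x - (cubeAvg φ c l - T)|
            = |(φ x - cubeAvg φ c l) - (gridFn φ δ x - T)| := by ring_nf
          _ ≤ |φ x - cubeAvg φ c l| + |gridFn φ δ x - T| := abs_sub _ _
          _ ≤ |φ x - cubeAvg φ c l| + 2 ^ n * B := by gcongr; exact hT x hx
    _ = 2 * (cubeOsc φ c l + 2 ^ n * B) := by
        rw [integral_add hdev (integrableOn_const volume_cube_ne_top), setIntegral_const,
          measureReal_cube hl.le, smul_eq_mul, cubeOsc]
        field_simp
    _ ≤ 2 * (2 ^ n + 1) * B := by linarith [hB c l hl (by linarith)]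

theorem setIntegral_abs_sub_gridFn_le (hφ : LocallyIntegrable φ) (hδ : 0 < δ)
    (hB : ∀ c l, 0 < l → l ≤ 2 * δ → cubeOsc φ c l ≤ B) (hl : 0 ≤ l) :
    ∫ x in cube c l, |φ x - gridFn φ δ x| ≤ (l + 2 * δ) ^ n * B := by
  set K := gridIndicesOfCube δ c l
  have hint : ∀ k ∈ K, IntegrableOn (fun x => |φ x - gridFn φ δ x|) (gridCube δ k) :=
    fun _ _ => ((hφ.integrableOn_cube.congr_set_ae cube_ae_eq_cubeIco.symm).sub
      (integrableOn_gridFn_gridCube hδ)).abs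
  have hdisj : (K : Set (Fin n → ℤ)).Pairwise (Disjoint on gridCube δ) := fun _ _ _ _ hne =>
    Set.disjoint_left.2 fun _ hx hx' =>
      hne (((mem_gridCube_iff hδ).1 hx).symm.trans ((mem_gridCube_iff hδ).1 hx'))
  have hB0 := nonneg_of_forall_cubeOsc_le hδ hB
  calc ∫ x in cube c l, |φ x - gridFn φ δ x|
      ≤ ∫ x in ⋃ k ∈ K, gridCube δ k, |φ x - gridFn φ δ x| :=
        setIntegral_mono_set (integrableOn_finset_iUnion.2 hint)
          (Eventually.of_forall fun _ => abs_nonneg _)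
          (cube_subset_biUnion_gridCube hδ).eventuallyLE
    _ = ∑ k ∈ K, ∫ x in gridCube δ k, |φ x - gridFn φ δ x| :=
        integral_biUnion_finset K (fun _ _ => measurableSet_cubeIco) hdisj hint
    _ ≤ ∑ _k ∈ K, B * δ ^ n :=
        Finset.sum_le_sum fun _ _ =>
          setIntegral_abs_sub_gridFn_gridCube_le hδ (hB _ _ hδ (by linarith))
    _ = K.card * (B * δ ^ n) := by rw [Finset.sum_const, nsmul_eq_mul]
    _ ≤ (l / δ + 2) ^ n * (B * δ ^ n) := by gcongr; exact card_gridIndicesOfCube_le hδ hl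
    _ = (l + 2 * δ) ^ n * B := by
        rw [mul_left_comm, ← mul_pow, add_mul, div_mul_cancel₀ _ hδ.ne']
        ring

theorem cubeOsc_sub_gridFn_le_of_lt (hφ : LocallyIntegrable φ) (hδ : 0 < δ)
    (hB : ∀ c l, 0 < l → l ≤ 2 * δ → cubeOsc φ c l ≤ B) (hδl : δ < l) :
    cubeOsc (fun x => φ x - gridFn φ δ x) c l ≤ 2 * 3 ^ n * B := by
  have hl : 0 < l := hδ.trans hδl
  have hB0 := nonneg_of_forall_cubeOsc_le hδ hB
  calc cubeOsc (fun x => φ x - gridFn φ δ x) c l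
      ≤ 2 * (∫ x in cube c l, |φ x - gridFn φ δ x - 0|) / l ^ n :=
        cubeOsc_le_two_mul hl.le (hφ.integrableOn_cube.sub (integrableOn_gridFn_cube hδ)) 0
    _ ≤ 2 * ((l + 2 * δ) ^ n * B) / l ^ n := by
        simp only [sub_zero]
        gcongr 2 * ?_ / _
        exact setIntegral_abs_sub_gridFn_le hφ hδ hB hl.le
    _ ≤ 2 * ((3 * l) ^ n * B) / l ^ n := by gcongr; linarith
    _ = 2 * 3 ^ n * B := by
        rw [mul_pow]
        field_simp

end GridApproximation

/-- Let `φ ∈ BMO(ℝⁿ)` and `δ > 0`, and let `h` be the step function whose value on each grid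
cube `Q_j` of side `δ` is the mean `φ_{Q_j}`. Then `‖φ - h‖_* ≤ C(n) M_{2δ}(φ)`, where
`M_{2δ}(φ)` is the supremum of the mean oscillation of `φ` over cubes of side at most `2δ`. -/
theorem bmo_grid_approximation (n : ℕ) :
    ∃ C > (0 : ℝ), ∀ (φ : EuclideanSpace ℝ (Fin n) → ℝ) (δ B : ℝ),
      LocallyIntegrable φ → 0 < δ →
      (∀ c l, 0 < l → l ≤ 2 * δ → cubeOsc φ c l ≤ B) →
      ∀ c l, 0 < l → cubeOsc (fun x => φ x - gridFn φ δ x) c l ≤ C * B := by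
  refine ⟨2 * (3 ^ n + 1), by positivity, fun φ δ B hφ hδ hB c l hl => ?_⟩
  have hB0 := nonneg_of_forall_cubeOsc_le hδ hB
  rcases le_or_gt l δ with hlδ | hδl
  · calc cubeOsc (fun x => φ x - gridFn φ δ x) c l ≤ 2 * (2 ^ n + 1) * B :=
          cubeOsc_sub_gridFn_le_of_le hφ hδ hB hl hlδ
      _ ≤ 2 * (3 ^ n + 1) * B := by gcongr; norm_num
  · calc cubeOsc (fun x => φ x - gridFn φ δ x) c l ≤ 2 * 3 ^ n * B :=
          cubeOsc_sub_gridFn_le_of_lt hφ hδ hB hδl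
      _ ≤ 2 * (3 ^ n + 1) * B := by gcongr; exact le_add_of_nonneg_right zero_le_one
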